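/- For every E ∈ ℝ one has t_1(E)² − t_2(E) − 2 = 4λ². Moreover, for every E in the topological interior of σ_1 ∪ σ_2 one has t_2(E)² − t_3(E) − 2 > 0. -/

import Mathlib

noncomputable section

open Filter Topology

namespace TMH

/-- the pair `(A_n(E), B_n(E))`:  `A_0 = [[E−λ,−1],[1,0]]`, `B_0 = [[E+λ,−1],[1,0]]`,
`A_{n+1} = B_n A_n`, `B_{n+1} = A_n B_n`. -/
def AB (lam E : ℝ) : ℕ → Matrix (Fin 2) (Fin 2) ℝ × Matrix (Fin 2) (Fin 2) ℝ
  | 0 => (!![E - lam, -1; 1, 0], !![E + lam, -1; 1, 0])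
  | n + 1 => ((AB lam E n).2 * (AB lam E n).1, (AB lam E n).1 * (AB lam E n).2)

def A (lam E : ℝ) (n : ℕ) : Matrix (Fin 2) (Fin 2) ℝ := (AB lam E n).1
def B (lam E : ℝ) (n : ℕ) : Matrix (Fin 2) (Fin 2) ℝ := (AB lam E n).2

/-- the trace polynomials `t_n(E) = tr(A_n(E))` -/
def t (lam E : ℝ) (n : ℕ) : ℝ := (A lam E n).trace

/-- the set `Σ_I` of type-I energies -/
def SigmaI (lam : ℝ) : Set ℝ := {E | ∃ k : ℕ, 1 ≤ k ∧ t lam E k = 0}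

/-- the set `Σ_II` of type-II energies -/
def SigmaII (lam : ℝ) : Set ℝ :=
  {E | ∃ n₀ : ℕ, ∀ n : ℕ, n₀ ≤ n → |t lam E (2 * n)| ≤ 2 ∧ 2 < |t lam E (2 * n + 1)|}

/-- the set `Σ_III` of type-III energies -/
def SigmaIII (lam : ℝ) : Set ℝ :=
  {E | ∃ n₀ : ℕ, ∀ n : ℕ, n₀ ≤ n → |t lam E (2 * n + 1)| ≤ 2 ∧ 2 < |t lam E (2 * n)|}

end TMH

theorem mem_nhds_of_mem_interior_union_of_isClosed {X : Type*} [TopologicalSpace X]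
    {s u : Set X} {x : X} (hx : x ∈ interior (s ∪ u)) (hs : IsClosed s) (hxs : x ∉ s) :
    u ∈ 𝓝 x := by
  filter_upwards [mem_interior_iff_mem_nhds.mp hx, hs.isOpen_compl.mem_nhds hxs] with y hsu hys
  exact hsu.resolve_left hys

namespace TMH

variable (lam E : ℝ)

theorem t_one : t lam E 1 = E ^ 2 - lam ^ 2 - 2 := by
  simp [t, A, AB, Matrix.trace, Fin.sum_univ_succ]
  ring

theorem t_two : t lam E 2 = (E ^ 2 - lam ^ 2) ^ 2 - 4 * E ^ 2 + 2 := by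
  simp [t, A, AB, Matrix.trace, Fin.sum_univ_succ]
  ring

theorem t_three : t lam E 3 = t lam E 1 ^ 2 * (t lam E 2 - 2) + 2 := by
  rw [t_one, t_two]
  simp [t, A, AB, Matrix.trace, Fin.sum_univ_succ]
  ring

theorem t_one_sq_sub_t_two : t lam E 1 ^ 2 - t lam E 2 - 2 = 4 * lam ^ 2 := by
  rw [t_one, t_two]
  ring

theorem t_two_sq_sub_t_three : t lam E 2 ^ 2 - t lam E 3 - 2 = 4 * lam ^ 2 * (2 - t lam E 2) := by
  rw [t_three, ← t_one_sq_sub_t_two lam E]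
  ring

theorem hasDerivAt_t_two : HasDerivAt (fun x => t lam x 2) (4 * E * t lam E 1) E := by
  simp only [t_two, t_one]
  have h_sq : HasDerivAt (fun x : ℝ => x ^ 2) (2 * E) E := by simpa using hasDerivAt_pow 2 E
  exact (((h_sq.sub_const (lam ^ 2)).fun_pow 2).sub (h_sq.const_mul 4) |>.add_const 2).congr_deriv
    (by push_cast; ring)

variable {lam E}

theorem t_two_lt_two_of_abs_t_one_le (hlam : lam ≠ 0) (h : |t lam E 1| ≤ 2) : t lam E 2 < 2 := by
  have h_sq : t lam E 1 ^ 2 ≤ 2 ^ 2 := sq_le_sq' (abs_le.mp h).1 (abs_le.mp h).2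
  have h_lam : 0 < lam ^ 2 := by positivity
  linarith [t_one_sq_sub_t_two lam E]

/-- Where `|t₁| > 2`, the point is interior to `σ₂` alone; `t₂ = 2` there would be a local maximum
of `t₂`, but `t₂' = 4 E t₁` vanishes only at `E = 0`, where `t₂ = λ⁴ + 2`. -/
theorem t_two_lt_two_of_mem_interior (hlam : lam ≠ 0)
    (hE : E ∈ interior ({E : ℝ | |t lam E 1| ≤ 2} ∪ {E : ℝ | |t lam E 2| ≤ 2})) :
    t lam E 2 < 2 := by
  rcases le_or_gt |t lam E 1| 2 with h_one | h_one
  · exact t_two_lt_two_of_abs_t_one_le hlam h_one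
  have h_closed : IsClosed {E : ℝ | |t lam E 1| ≤ 2} := by
    simp only [t_one]
    exact isClosed_le (by fun_prop) continuous_const
  have h_near : ∀ᶠ x in 𝓝 E, t lam x 2 ≤ 2 :=
    Filter.mem_of_superset (mem_nhds_of_mem_interior_union_of_isClosed hE h_closed h_one.not_ge)
      fun x (hx : |t lam x 2| ≤ 2) => (abs_le.mp hx).2
  refine h_near.self_of_nhds.lt_of_ne fun h_eq => ?_
  have h_max : IsLocalMax (fun x => t lam x 2) E := h_near.mono fun x hx => hx.trans_eq h_eq.symm
  have h_crit : 4 * E * t lam E 1 = 0 := (hasDerivAt_t_two lam E).deriv ▸ h_max.deriv_eq_zero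
  have h_zero : E = 0 := by
    have : t lam E 1 ≠ 0 := fun h => by simp [h] at h_one; linarith
    simpa [this] using h_crit
  rw [t_two, h_zero] at h_eq
  exact hlam (pow_eq_zero_iff four_ne_zero |>.mp (by linear_combination h_eq))

/-- **Lemma (initial conditions for the trace recursion).**
`t₁(E)² − t₂(E) − 2 = 4λ²` for every `E ∈ ℝ`, and `t₂(E)² − t₃(E) − 2 > 0` for every
`E` in the interior of `σ₁ ∪ σ₂`, where `σ_n = {E : |t_n(E)| ≤ 2}`. -/
theorem initial_condition (lam : ℝ) (hlam : lam ≠ 0) :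
    (∀ E : ℝ, t lam E 1 ^ 2 - t lam E 2 - 2 = 4 * lam ^ 2) ∧
    (∀ E ∈ interior ({E : ℝ | |t lam E 1| ≤ 2} ∪ {E : ℝ | |t lam E 2| ≤ 2}),
      0 < t lam E 2 ^ 2 - t lam E 3 - 2) := by
  refine ⟨t_one_sq_sub_t_two lam, fun E hE => ?_⟩
  rw [t_two_sq_sub_t_three]
  exact mul_pos (by positivity) (sub_pos.mpr (t_two_lt_two_of_mem_interior hlam hE))

end TMH
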